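/- arXiv:2112.10216 — 5 statements merged into one kernel-verified Lean document; each statement's English description precedes it below -/
import Mathlib

section
/- Let (a_n) and (c_n) be sequences of positive reals such that (a_n) is bounded, c_n → +∞, and ∑ a_n = +∞. Then there exists a strictly decreasing sequence (r_n) of positive reals such that ∑ a_n r_n < +∞ and ∑ a_n c_n r_n = +∞. -/
/-!
Cut `ℕ` into consecutive blocks `[n k, n (k + 1))` on which `c ≥ 2 ^ k` (for `k ≥ 1`) and whose
`a`-sums `A k` satisfy `A k ≥ 1 + ∑ i < n k, a i`, so that `A` is increasing. Taking
`r = (1/2) ^ k / A k` on block `k`, each block contributes `(1/2) ^ k` to `∑ a r` but at least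
`1` to `∑ a c r`. This `r` is only antitone; multiplying it by `1 + (1/2) ^ n` makes it strictly
decreasing while changing it by a factor between `1` and `2`.
-/

open Finset Filter

lemma tsum_ofReal_ne_top_iff_summable {ι : Type*} {f : ι → ℝ} (hf : ∀ i, 0 ≤ f i) :
    ∑' i, ENNReal.ofReal (f i) ≠ ⊤ ↔ Summable f := by
  refine ⟨fun h => ?_, Summable.tsum_ofReal_ne_top⟩
  simpa [ENNReal.toReal_ofReal (hf _)] using ENNReal.summable_toReal h

lemma Antitone.exists_strictAnti_le_le_two_mul {r : ℕ → ℝ} (hr : Antitone r)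
    (hr₀ : ∀ n, 0 < r n) :
    ∃ s : ℕ → ℝ, StrictAnti s ∧ (∀ n, r n ≤ s n) ∧ ∀ n, s n ≤ 2 * r n := by
  have hq : ∀ n, (1 / 2 : ℝ) ^ n ≤ 1 := fun n => pow_le_one₀ (by norm_num) (by norm_num)
  refine ⟨fun n => r n * (1 + (1 / 2) ^ n), fun m k hmk => ?_, fun n => ?_, fun n => ?_⟩
  · exact mul_lt_mul' (hr hmk.le)
      (add_lt_add_right (pow_lt_pow_right_of_lt_one₀ (by norm_num) (by norm_num) hmk) 1)
      (by positivity) (hr₀ m)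
  · exact le_mul_of_one_le_right (hr₀ n).le (le_add_of_nonneg_right (by positivity))
  · rw [mul_comm 2]
    exact mul_le_mul_of_nonneg_left (by linarith [hq n]) (hr₀ n).le

def blockIndex (n : ℕ → ℕ) (m : ℕ) : ℕ := Nat.findGreatest (fun k => n k ≤ m) m

lemma blockIndex_mono (n : ℕ → ℕ) : Monotone (blockIndex n) :=
  fun _ _ h => Nat.findGreatest_mono (fun _ hk => hk.trans h) h

lemma blockIndex_eq_of_mem_Ico {n : ℕ → ℕ} (hn : StrictMono n) {k m : ℕ}
    (hm : m ∈ Ico (n k) (n (k + 1))) : blockIndex n m = k := by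
  rw [mem_Ico] at hm
  refine Nat.findGreatest_eq_iff.2 ⟨hn.le_apply.trans hm.1, fun _ => hm.1, fun j hkj _ hj => ?_⟩
  exact (hm.2.trans_le (hn.monotone hkj)).not_ge hj

lemma sum_Ico_mul_comp_blockIndex {n : ℕ → ℕ} (hn : StrictMono n) (f t : ℕ → ℝ) (k : ℕ) :
    ∑ m ∈ Ico (n k) (n (k + 1)), f m * t (blockIndex n m) =
      (∑ m ∈ Ico (n k) (n (k + 1)), f m) * t k := by
  rw [sum_mul]
  exact sum_congr rfl fun m hm => by rw [blockIndex_eq_of_mem_Ico hn hm]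

lemma sum_Ico_eq_sum_sum_Ico {M : Type*} [AddCommMonoid M] {n : ℕ → ℕ} (hn : Monotone n)
    (f : ℕ → M) (N : ℕ) :
    ∑ m ∈ Ico (n 0) (n N), f m = ∑ k ∈ range N, ∑ m ∈ Ico (n k) (n (k + 1)), f m := by
  induction N with
  | zero => simp
  | succ N ih =>
    rw [sum_range_succ, ← ih, sum_Ico_consecutive _ (hn (Nat.zero_le N)) (hn N.le_succ)]

lemma summable_of_sum_sum_Ico_le {F : ℕ → ℝ} {n : ℕ → ℕ} (hF : ∀ m, 0 ≤ F m)
    (hn : StrictMono n) (h₀ : n 0 = 0) {C : ℝ}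
    (h : ∀ N, ∑ k ∈ range N, ∑ m ∈ Ico (n k) (n (k + 1)), F m ≤ C) : Summable F :=
  summable_of_sum_range_le hF fun N => calc
    ∑ m ∈ range N, F m ≤ ∑ m ∈ range (n N), F m :=
      sum_le_sum_of_subset_of_nonneg (range_subset_range.2 hn.le_apply) fun m _ _ => hF m
    _ = ∑ k ∈ range N, ∑ m ∈ Ico (n k) (n (k + 1)), F m := by
      simpa [h₀] using sum_Ico_eq_sum_sum_Ico hn.monotone F N
    _ ≤ C := h N

lemma not_summable_of_one_le_sum_Ico {F : ℕ → ℝ} {n : ℕ → ℕ} (hF : ∀ m, 0 ≤ F m)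
    (hn : Monotone n) (h : ∀ k, 1 ≤ ∑ m ∈ Ico (n k) (n (k + 1)), F m) : ¬ Summable F := by
  intro hsum
  obtain ⟨N, hN⟩ := exists_nat_gt (∑' m, F m)
  have hpartial : (N : ℝ) ≤ ∑ m ∈ Ico (n 0) (n N), F m := by
    rw [sum_Ico_eq_sum_sum_Ico hn]
    simpa using sum_le_sum fun k (_ : k ∈ range N) => h k
  linarith [hsum.sum_le_tsum (Ico (n 0) (n N)) fun m _ => hF m]

lemma exists_block_boundary_after {a c : ℕ → ℝ}
    (hS : Tendsto (fun N => ∑ i ∈ range N, a i) atTop atTop) (hc : Tendsto c atTop atTop)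
    (s : ℕ) (x : ℝ) :
    ∃ m, s < m ∧ (∀ i ≥ m, x ≤ c i) ∧ 2 * ∑ i ∈ range s, a i + 1 ≤ ∑ i ∈ range m, a i :=
  ((eventually_gt_atTop s).and ((eventually_forall_ge_atTop.2 (hc.eventually_ge_atTop x)).and
    (hS.eventually_ge_atTop _))).exists

lemma exists_block_boundaries {a c : ℕ → ℝ}
    (hS : Tendsto (fun N => ∑ i ∈ range N, a i) atTop atTop) (hc : Tendsto c atTop atTop) :
    ∃ n : ℕ → ℕ, StrictMono n ∧ n 0 = 0 ∧ (∀ k, ∀ i ≥ n (k + 1), (2 : ℝ) ^ (k + 1) ≤ c i) ∧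
      ∀ k, 2 * ∑ i ∈ range (n k), a i + 1 ≤ ∑ i ∈ range (n (k + 1)), a i := by
  choose f hf using fun s k => exists_block_boundary_after hS hc s ((2 : ℝ) ^ (k + 1))
  let n : ℕ → ℕ := fun k => Nat.rec 0 (fun k nk => f nk k) k
  exact ⟨n, strictMono_nat_of_lt_succ fun k => (hf (n k) k).1, rfl,
    fun k => (hf (n k) k).2.1, fun k => (hf (n k) k).2.2⟩

theorem exists_antitone_summable_mul_not_summable_mul {a c : ℕ → ℝ} (ha : ∀ n, 0 ≤ a n)
    (ha_div : ¬ Summable a) (hc : Tendsto c atTop atTop) (hc₀ : ∀ n, 0 ≤ c n) :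
    ∃ r : ℕ → ℝ, (∀ n, 0 < r n) ∧ Antitone r ∧ Summable (fun n => a n * r n) ∧
      ¬ Summable (fun n => a n * c n * r n) := by
  obtain ⟨n, hn, hn₀, hcn, hSn⟩ :=
    exists_block_boundaries ((not_summable_iff_tendsto_nat_atTop_of_nonneg ha).1 ha_div) hc
  have hS₀ : ∀ N, 0 ≤ ∑ i ∈ range N, a i := fun N => sum_nonneg fun i _ => ha i
  set A : ℕ → ℝ := fun k => ∑ i ∈ Ico (n k) (n (k + 1)), a i
  have hA_eq : ∀ k, A k = ∑ i ∈ range (n (k + 1)), a i - ∑ i ∈ range (n k), a i :=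
    fun k => sum_Ico_eq_sub _ (hn.monotone k.le_succ)
  have hA₀ : ∀ k, 0 < A k := fun k => by linarith [hA_eq k, hSn k, hS₀ (n k)]
  have hA_mono : Monotone A := monotone_nat_of_le_succ fun k => by
    linarith [hA_eq k, hA_eq (k + 1), hSn (k + 1), hS₀ (n k)]
  set t : ℕ → ℝ := fun k => (1 / 2) ^ k / A k
  have ht_anti : Antitone t := fun j k hjk =>
    div_le_div₀ (by positivity) (pow_le_pow_of_le_one (by norm_num) (by norm_num) hjk)
      (hA₀ j) (hA_mono hjk)
  have hAt : ∀ k, (∑ i ∈ Ico (n k) (n (k + 1)), a i) * t k = (1 / 2) ^ k :=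
    fun k => mul_div_cancel₀ _ (hA₀ k).ne'
  have ht₀ : ∀ k, 0 < t k := fun k => div_pos (by positivity) (hA₀ k)
  have hr₀ : ∀ m, 0 < t (blockIndex n m) := fun m => ht₀ _
  refine ⟨fun m => t (blockIndex n m), hr₀, ht_anti.comp_monotone (blockIndex_mono n), ?_, ?_⟩
  · refine summable_of_sum_sum_Ico_le (fun m => mul_nonneg (ha m) (hr₀ m).le) hn hn₀ (C := 2)
      fun N => ?_
    simp only [sum_Ico_mul_comp_blockIndex hn, hAt]
    exact sum_geometric_two_le N
  · refine not_summable_of_one_le_sum_Ico (n := fun k => n (k + 1))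
      (fun m => mul_nonneg (mul_nonneg (ha m) (hc₀ m)) (hr₀ m).le)
      (fun _ _ h => hn.monotone (Nat.succ_le_succ h)) fun k => ?_
    rw [sum_Ico_mul_comp_blockIndex hn]
    calc (1 : ℝ)
        = (∑ m ∈ Ico (n (k + 1)) (n (k + 1 + 1)), a m * 2 ^ (k + 1)) * t (k + 1) := by
          rw [← sum_mul, mul_assoc, mul_left_comm, hAt, ← mul_pow]; norm_num
      _ ≤ _ := by
          gcongr with m hm
          · exact (ht₀ _).le
          · exact ha m
          · exact hcn k m (mem_Ico.1 hm).1

theorem exists_strictAnti_summable_mul_not_summable_mul {a c : ℕ → ℝ} (ha : ∀ n, 0 ≤ a n)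
    (ha_div : ¬ Summable a) (hc : Tendsto c atTop atTop) (hc₀ : ∀ n, 0 ≤ c n) :
    ∃ r : ℕ → ℝ, (∀ n, 0 < r n) ∧ StrictAnti r ∧ Summable (fun n => a n * r n) ∧
      ¬ Summable (fun n => a n * c n * r n) := by
  obtain ⟨r, hr₀, hr, hsum, hdiv⟩ :=
    exists_antitone_summable_mul_not_summable_mul ha ha_div hc hc₀
  obtain ⟨s, hs, hrs, hs₂⟩ := hr.exists_strictAnti_le_le_two_mul hr₀
  have hs₀ : ∀ n, 0 < s n := fun n => (hr₀ n).trans_le (hrs n)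
  refine ⟨s, hs₀, hs, ?_, fun hsum' => hdiv ?_⟩
  · refine (hsum.mul_left 2).of_nonneg_of_le (fun n => mul_nonneg (ha n) (hs₀ n).le) fun n => ?_
    rw [mul_left_comm]
    exact mul_le_mul_of_nonneg_left (hs₂ n) (ha n)
  · exact hsum'.of_nonneg_of_le (fun n => mul_nonneg (mul_nonneg (ha n) (hc₀ n)) (hr₀ n).le)
      fun n => mul_le_mul_of_nonneg_left (hrs n) (mul_nonneg (ha n) (hc₀ n))

theorem stmt0_general (a c : ℕ → ℝ)
    (ha_pos : ∀ n, 0 < a n) (hc_pos : ∀ n, 0 < c n)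
    (hc : Filter.Tendsto c Filter.atTop Filter.atTop)
    (ha_div : ∑' n, ENNReal.ofReal (a n) = ⊤) :
    ∃ r : ℕ → ℝ, (∀ n, 0 < r n) ∧ StrictAnti r ∧
      (∑' n, ENNReal.ofReal (a n * r n)) ≠ ⊤ ∧
      (∑' n, ENNReal.ofReal (a n * c n * r n)) = ⊤ := by
  have ha : ∀ n, 0 ≤ a n := fun n => (ha_pos n).le
  have hc₀ : ∀ n, 0 ≤ c n := fun n => (hc_pos n).le
  obtain ⟨r, hr₀, hr, hsum, hdiv⟩ := exists_strictAnti_summable_mul_not_summable_mul ha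
    (fun h => (tsum_ofReal_ne_top_iff_summable ha).2 h ha_div) hc hc₀
  refine ⟨r, hr₀, hr, hsum.tsum_ofReal_ne_top, ?_⟩
  rw [← not_ne_iff, tsum_ofReal_ne_top_iff_summable
    fun n => mul_nonneg (mul_nonneg (ha n) (hc₀ n)) (hr₀ n).le]
  exact hdiv

/-- Lemma 1 of the paper. Given positive sequences (a_n) bounded,
(c_n) → ∞, and ∑ a_n = ∞, there is a strictly decreasing positive sequence (r_n)
with ∑ a_n r_n < ∞ and ∑ a_n c_n r_n = ∞. -/
theorem stmt0 (a c : ℕ → ℝ)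
    (ha_pos : ∀ n, 0 < a n) (hc_pos : ∀ n, 0 < c n)
    (ha_bdd : ∃ B : ℝ, ∀ n, a n ≤ B)
    (hc : Filter.Tendsto c Filter.atTop Filter.atTop)
    (ha_div : ∑' n, ENNReal.ofReal (a n) = ⊤) :
    ∃ r : ℕ → ℝ, (∀ n, 0 < r n) ∧ StrictAnti r ∧
      (∑' n, ENNReal.ofReal (a n * r n)) ≠ ⊤ ∧
      (∑' n, ENNReal.ofReal (a n * c n * r n)) = ⊤ :=
  stmt0_general a c ha_pos hc_pos hc ha_div
end

section
/- Let M be a mean defined on all finite tuples of positive reals (i.e., min(v) ≤ M(v) ≤ max(v) for every tuple v), and let (a_n) be a sequence of positive reals such that c_n := M(a_1,...,a_n)/a_n tends to +∞. Then the sequence (a_n) is bounded above; in fact a_n ≤ max(a_1,...,a_{n_0}) for all n, where n_0 is any index with c_n > 1 for all n > n_0. -/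
/-- `M n v` is the value of the mean on the `(n+1)`-tuple `v`.  A mean satisfies
`min v ≤ M v ≤ max v` on tuples of positive reals. -/
def IsMean (M : ∀ n : ℕ, (Fin (n+1) → ℝ) → ℝ) : Prop :=
  ∀ (n : ℕ) (v : Fin (n+1) → ℝ), (∀ i, 0 < v i) →
    Finset.univ.inf' Finset.univ_nonempty v ≤ M n v ∧
    M n v ≤ Finset.univ.sup' Finset.univ_nonempty v

/-- If `M` is a mean and `(a_n)` a positive sequence with
`c_n := M(a_1,…,a_n)/a_n → +∞`, then `(a_n)` is bounded above; in fact
`a_n ≤ max(a_1,…,a_{n_0})` for all `n`, for any index `n_0` with `c_n > 1` for all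
`n > n_0`. (Sequences are indexed from 0 here: `M n (fun i => a i)` is the mean of
the first `n+1` terms.) -/
theorem stmt3 (M : ∀ n : ℕ, (Fin (n+1) → ℝ) → ℝ) (hM : IsMean M)
    (a : ℕ → ℝ) (ha_pos : ∀ n, 0 < a n)
    (hc : Filter.Tendsto (fun n => M n (fun i => a i.1) / a n) Filter.atTop Filter.atTop) :
    (∃ B : ℝ, ∀ n, a n ≤ B) ∧
    ∀ n₀ : ℕ, (∀ n, n₀ < n → 1 < M n (fun i => a i.1) / a n) →
      ∀ n, a n ≤ Finset.univ.sup' Finset.univ_nonempty (fun i : Fin (n₀+1) => a i.1) := by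
  have key : ∀ n₀ : ℕ, (∀ n, n₀ < n → 1 < M n (fun i => a i.1) / a n) →
      ∀ n, a n ≤ Finset.univ.sup' Finset.univ_nonempty (fun i : Fin (n₀+1) => a i.1) := by
    intro n₀ h n
    induction n using Nat.strong_induction_on with
    | _ n ih =>
      by_cases hn : n ≤ n₀
      · exact Finset.le_sup' (f := fun i : Fin (n₀+1) => a i.1)
          (Finset.mem_univ (⟨n, by omega⟩ : Fin (n₀+1)))
      · push_neg at hn
        have h1 := h n hn
        have hMn : a n < M n (fun i => a i.1) := by
          have := (lt_div_iff₀ (ha_pos n)).mp h1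
          linarith
        have hsup := (hM n (fun i => a i.1) (fun i => ha_pos i.1)).2
        have hlt : a n < Finset.univ.sup' Finset.univ_nonempty (fun i : Fin (n+1) => a i.1) :=
          lt_of_lt_of_le hMn hsup
        obtain ⟨i, -, hi⟩ := (Finset.lt_sup'_iff _).mp hlt
        have hin : i.1 < n := by
          rcases lt_or_eq_of_le (Nat.lt_succ_iff.mp i.2) with h' | h'
          · exact h'
          · exfalso; rw [h'] at hi; exact lt_irrefl _ hi
        exact le_trans hi.le (ih i.1 hin)
  refine ⟨?_, key⟩
  obtain ⟨N, hN⟩ := Filter.eventually_atTop.mp (hc.eventually_gt_atTop 1)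
  exact ⟨Finset.univ.sup' Finset.univ_nonempty (fun i : Fin (N+1) => a i.1),
    key N (fun n hn => hN n hn.le)⟩
end

section
/- Let M be a homogeneous and monotone mean on positive reals. If there exists a sequence (a_n) of positive reals such that ∑ a_n = +∞ and M(a_1,...,a_n)/a_n → +∞ as n → ∞, then M is not a weak-Hardy mean; that is, there exists a sequence (b_n) of positive reals with ∑ b_n < +∞ but ∑_{n=1}^∞ M(b_1,...,b_n) = +∞. -/
open Filter Finset


/-- `M` is (positively) homogeneous. -/
def IsHomogeneousMean (M : ∀ n : ℕ, (Fin (n+1) → ℝ) → ℝ) : Prop :=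
  ∀ (n : ℕ) (v : Fin (n+1) → ℝ) (t : ℝ), 0 < t → (∀ i, 0 < v i) →
    M n (fun i => t * v i) = t * M n v

/-- `M` is nondecreasing in each variable (on positive tuples). -/
def IsMonotoneMean (M : ∀ n : ℕ, (Fin (n+1) → ℝ) → ℝ) : Prop :=
  ∀ (n : ℕ) (v w : Fin (n+1) → ℝ), (∀ i, 0 < v i) → (∀ i, v i ≤ w i) →
    M n v ≤ M n w

/-- `M` is a weak-Hardy mean: `∑ M(b_1,…,b_n) < ∞` for every summable positive
sequence `(b_n)` (sequences indexed from 0). -/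
def IsWeakHardyMean (M : ∀ n : ℕ, (Fin (n+1) → ℝ) → ℝ) : Prop :=
  ∀ b : ℕ → ℝ, (∀ n, 0 < b n) → (∑' n, ENNReal.ofReal (b n)) ≠ ⊤ →
    (∑' n, ENNReal.ofReal (M n (fun i => b i.1))) ≠ ⊤

/-- main theorem: a homogeneous monotone mean admitting a positive
sequence `(a_n)` with `∑ a_n = ∞` and `M(a_1,…,a_n)/a_n → ∞` is not weak-Hardy:
there is a positive summable `(b_n)` with `∑ M(b_1,…,b_n) = ∞`. -/
theorem stmt5 (M : ∀ n : ℕ, (Fin (n+1) → ℝ) → ℝ) (hM : IsMean M)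
    (hhom : IsHomogeneousMean M) (hmono : IsMonotoneMean M)
    (a : ℕ → ℝ) (ha_pos : ∀ n, 0 < a n)
    (ha_div : ∑' n, ENNReal.ofReal (a n) = ⊤)
    (hc : Filter.Tendsto (fun n => M n (fun i => a i.1) / a n) Filter.atTop Filter.atTop) :
    ∃ b : ℕ → ℝ, (∀ n, 0 < b n) ∧ (∑' n, ENNReal.ofReal (b n)) ≠ ⊤ ∧
      (∑' n, ENNReal.ofReal (M n (fun i => b i.1))) = ⊤ := by
  classical
  set C : ℕ → ℝ := fun n => M n (fun i => a i.1) with hCdef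
  set S : ℕ → ℕ → ℝ := fun m n => ∑ k ∈ Finset.Ico m n, a k with hSdef
  have ha_nonneg : ∀ n, 0 ≤ a n := fun n => (ha_pos n).le
  have hnotsum : ¬ Summable a := by
    intro h
    rw [← ENNReal.ofReal_tsum_of_nonneg ha_nonneg h] at ha_div
    exact ENNReal.ofReal_ne_top ha_div
  have hdiv : Tendsto (fun n => ∑ k ∈ Finset.range n, a k) atTop atTop :=
    (not_summable_iff_tendsto_nat_atTop_of_nonneg ha_nonneg).1 hnotsum
  -- step existence
  have hstep : ∀ (m : ℕ) (R K : ℝ), ∃ n : ℕ, m < n ∧ R ≤ S m n ∧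
      ∀ k, n ≤ k → K * a k ≤ C k := by
    intro m R K
    obtain ⟨N₀, hN₀⟩ := (Filter.eventually_atTop).1 (hc.eventually_ge_atTop K)
    have htail : Tendsto (fun n => S m n) atTop atTop := by
      have h1 : Tendsto (fun n => (∑ k ∈ Finset.range n, a k) +
          (-(∑ k ∈ Finset.range m, a k))) atTop atTop :=
        tendsto_atTop_add_const_right _ _ hdiv
      refine h1.congr' ?_
      filter_upwards [eventually_ge_atTop m] with n hn
      simp only [hSdef]
      rw [Finset.sum_Ico_eq_sub a hn]
      ring
    obtain ⟨n, hn1, hn2, hn3⟩ :=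
      ((htail.eventually_ge_atTop R).and ((eventually_ge_atTop (m+1)).and
        (eventually_ge_atTop N₀))).exists
    refine ⟨n, hn2, hn1, fun k hk => ?_⟩
    have := hN₀ k (le_trans hn3 hk)
    exact (le_div_iff₀ (ha_pos k)).1 this
  choose F hF1 hF2 hF3 using hstep
  -- blocks
  let g : ℕ → ℕ × ℕ := fun j => Nat.rec (0, F 0 1 2)
    (fun j p => (p.2, F p.2 (max 1 (S p.1 p.2)) (2^(j+2)))) j
  let N : ℕ → ℕ := fun j => (g j).1
  have hN0 : N 0 = 0 := rfl
  have hNsucc : ∀ j, N (j+1) = (g j).2 := fun j => rfl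
  have hgsucc : ∀ j, g (j+1) = ((g j).2, F (g j).2 (max 1 (S (g j).1 (g j).2)) (2^(j+2))) :=
    fun j => rfl
  have hNlt : ∀ j, N j < N (j+1) := by
    intro j
    cases j with
    | zero => exact hF1 0 1 2
    | succ j => exact hF1 _ _ _
  set A : ℕ → ℝ := fun j => S (N j) (N (j+1)) with hAdef
  have hA0 : (1:ℝ) ≤ A 0 := hF2 0 1 2
  have hAsucc : ∀ j, max 1 (A j) ≤ A (j+1) := by
    intro j
    exact hF2 (g j).2 (max 1 (S (g j).1 (g j).2)) (2^(j+2))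
  have hA1 : ∀ j, (1:ℝ) ≤ A j := by
    intro j
    cases j with
    | zero => exact hA0
    | succ j => exact le_trans (le_max_left _ _) (hAsucc j)
  have hApos : ∀ j, (0:ℝ) < A j := fun j => lt_of_lt_of_le one_pos (hA1 j)
  have hAmono : ∀ j, A j ≤ A (j+1) := fun j => le_trans (le_max_right _ _) (hAsucc j)
  have hthresh : ∀ j k, N (j+1) ≤ k → (2:ℝ)^(j+1) * a k ≤ C k := by
    intro j k hk
    cases j with
    | zero =>
      have := hF3 0 1 2 k hk
      norm_num at this ⊢
      exact this
    | succ j =>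
      exact hF3 (g j).2 (max 1 (S (g j).1 (g j).2)) (2^(j+2)) k hk
  -- epsilons
  set ε : ℕ → ℝ := fun j => ((2:ℝ)^j * A j)⁻¹ with hεdef
  have hεpos : ∀ j, 0 < ε j := fun j =>
    inv_pos.2 (mul_pos (pow_pos two_pos j) (hApos j))
  have hεanti : Antitone ε := by
    apply antitone_nat_of_succ_le
    intro j
    apply inv_anti₀ (mul_pos (pow_pos two_pos j) (hApos j))
    have h1 : (2:ℝ)^j ≤ 2^(j+1) := by
      apply pow_le_pow_right₀ one_le_two
      omega
    have := hAmono j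
    nlinarith [hApos j, pow_pos (two_pos (α := ℝ)) j]
  -- index function
  have hNmono : StrictMono N := strictMono_nat_of_lt_succ hNlt
  have hidx_ex : ∀ k, ∃ j, k < N (j+1) :=
    fun k => ⟨k, lt_of_lt_of_le (Nat.lt_succ_self k) hNmono.le_apply⟩
  set idx : ℕ → ℕ := fun k => Nat.find (hidx_ex k) with hidxdef
  have hidx1 : ∀ k, k < N (idx k + 1) := fun k => Nat.find_spec (hidx_ex k)
  have hidx2 : ∀ k, N (idx k) ≤ k := by
    intro k
    rcases h : idx k with _ | j
    · rw [hN0]; exact Nat.zero_le k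
    · have hj : j < idx k := by omega
      have h2 := Nat.find_min (hidx_ex k) hj
      push_neg at h2
      exact h2
  have hidx_mono : Monotone idx := by
    intro k m hkm
    exact Nat.find_min' _ (lt_of_le_of_lt hkm (hidx1 m))
  have hidx_eq : ∀ j k, N j ≤ k → k < N (j+1) → idx k = j := by
    intro j k h1 h2
    refine le_antisymm (Nat.find_min' _ h2) ?_
    by_contra h
    push_neg at h
    have : idx k + 1 ≤ j := h
    have := hNmono.monotone this
    have := hidx1 k
    omega
  -- the sequence b
  set b : ℕ → ℝ := fun k => ε (idx k) * a k with hbdef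
  have hbpos : ∀ k, 0 < b k := fun k => mul_pos (hεpos _) (ha_pos k)
  -- block sums of b
  have hbblock : ∀ j, ∑ k ∈ Finset.Ico (N j) (N (j+1)), b k = ((2:ℝ)^j)⁻¹ := by
    intro j
    have : ∑ k ∈ Finset.Ico (N j) (N (j+1)), b k
        = ∑ k ∈ Finset.Ico (N j) (N (j+1)), ε j * a k := by
      apply Finset.sum_congr rfl
      intro k hk
      rw [Finset.mem_Ico] at hk
      simp only [hbdef]
      rw [hidx_eq j k hk.1 hk.2]
    rw [this, ← Finset.mul_sum]
    have hAne : A j ≠ 0 := ne_of_gt (hApos j)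
    have h2ne : (2:ℝ)^j ≠ 0 := ne_of_gt (pow_pos two_pos j)
    show ((2:ℝ)^j * A j)⁻¹ * A j = ((2:ℝ)^j)⁻¹
    field_simp
  have hbparts : ∀ m, ∑ k ∈ Finset.Ico (N 0) (N m), b k
      = ∑ j ∈ Finset.range m, ((2:ℝ)^j)⁻¹ := by
    intro m
    induction m with
    | zero => simp
    | succ m ih =>
      rw [← Finset.sum_Ico_consecutive b (hNmono.monotone (Nat.zero_le m)) (hNlt m).le,
        ih, hbblock, Finset.sum_range_succ]
  have hbbound : ∀ m, ∑ k ∈ Finset.range m, b k ≤ 2 := by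
    intro m
    have h1 : ∑ k ∈ Finset.range m, b k ≤ ∑ k ∈ Finset.range (N m), b k := by
      apply Finset.sum_le_sum_of_subset_of_nonneg
      · exact Finset.range_subset_range.2 hNmono.le_apply
      · intro k _ _; exact (hbpos k).le
    have h2 : ∑ k ∈ Finset.range (N m), b k = ∑ j ∈ Finset.range m, ((2:ℝ)^j)⁻¹ := by
      rw [← hbparts m]
      rw [hN0]
      rw [Finset.range_eq_Ico]
    have h3 : ∑ j ∈ Finset.range m, ((2:ℝ)^j)⁻¹ ≤ 2 := by
      have := sum_geometric_two_le m
      simp only [one_div, inv_pow] at this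
      simpa [inv_pow] using this
    linarith
  have hbsum : Summable b := summable_of_sum_range_le (fun n => (hbpos n).le) hbbound
  refine ⟨b, hbpos, ?_, ?_⟩
  · rw [← ENNReal.ofReal_tsum_of_nonneg (fun n => (hbpos n).le) hbsum]
    exact ENNReal.ofReal_ne_top
  -- the M-sum diverges
  · have hMpos : ∀ (n : ℕ) (v : Fin (n+1) → ℝ), (∀ i, 0 < v i) → 0 < M n v := by
      intro n v hv
      refine lt_of_lt_of_le ?_ (hM n v hv).1
      rw [Finset.lt_inf'_iff]
      intro i _
      exact hv i
    have hkey : ∀ n j, idx n = j + 1 →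
        ε (j+1) * ((2:ℝ)^(j+1) * a n) ≤ M n (fun i => b i.1) := by
      intro n j hj
      have hle : M n (fun i => ε (j+1) * a i.1) ≤ M n (fun i => b i.1) := by
        apply hmono n _ _ (fun i => mul_pos (hεpos _) (ha_pos _))
        intro i
        have hi : (i:ℕ) ≤ n := Nat.lt_succ_iff.1 i.2
        have : idx i.1 ≤ j + 1 := hj ▸ hidx_mono hi
        exact mul_le_mul_of_nonneg_right (hεanti this) (ha_nonneg _)
      have heq : M n (fun i => ε (j+1) * a i.1) = ε (j+1) * C n :=
        hhom n _ (ε (j+1)) (hεpos _) (fun i => ha_pos _)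
      have hth : (2:ℝ)^(j+1) * a n ≤ C n := by
        apply hthresh j n
        have := hidx2 n
        rw [hj] at this
        exact this
      calc ε (j+1) * ((2:ℝ)^(j+1) * a n) ≤ ε (j+1) * C n :=
            mul_le_mul_of_nonneg_left hth (hεpos _).le
        _ = M n (fun i => ε (j+1) * a i.1) := heq.symm
        _ ≤ M n (fun i => b i.1) := hle
    -- block lower bound for M-sums
    have hMblock : ∀ j, (1:ℝ) ≤ ∑ n ∈ Finset.Ico (N (j+1)) (N (j+2)),
        M n (fun i => b i.1) := by
      intro j
      have h1 : ∀ n ∈ Finset.Ico (N (j+1)) (N (j+2)),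
          ε (j+1) * ((2:ℝ)^(j+1) * a n) ≤ M n (fun i => b i.1) := by
        intro n hn
        rw [Finset.mem_Ico] at hn
        exact hkey n j (hidx_eq (j+1) n hn.1 hn.2)
      have h2 : ∑ n ∈ Finset.Ico (N (j+1)) (N (j+2)), ε (j+1) * ((2:ℝ)^(j+1) * a n)
          ≤ ∑ n ∈ Finset.Ico (N (j+1)) (N (j+2)), M n (fun i => b i.1) :=
        Finset.sum_le_sum h1
      have h3 : ∑ n ∈ Finset.Ico (N (j+1)) (N (j+2)), ε (j+1) * ((2:ℝ)^(j+1) * a n)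
          = ε (j+1) * ((2:ℝ)^(j+1) * A (j+1)) := by
        rw [← Finset.mul_sum, ← Finset.mul_sum]
      have h4 : ε (j+1) * ((2:ℝ)^(j+1) * A (j+1)) = 1 := by
        show ((2:ℝ)^(j+1) * A (j+1))⁻¹ * ((2:ℝ)^(j+1) * A (j+1)) = 1
        exact inv_mul_cancel₀ (ne_of_gt (mul_pos (pow_pos two_pos (j+1)) (hApos (j+1))))
      rw [h3, h4] at h2
      exact h2
    have hMparts : ∀ J : ℕ, (J:ℝ) ≤ ∑ n ∈ Finset.Ico (N 1) (N (J+1)),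
        M n (fun i => b i.1) := by
      intro J
      induction J with
      | zero => simp
      | succ J ih =>
        rw [← Finset.sum_Ico_consecutive _ (hNmono.monotone (by omega : 1 ≤ J+1))
          (hNlt (J+1)).le]
        push_cast
        have := hMblock J
        linarith
    have hbound : ∀ J : ℕ, (J : ENNReal) ≤ ∑' n, ENNReal.ofReal (M n (fun i => b i.1)) := by
      intro J
      have h1 : ∑ n ∈ Finset.Ico (N 1) (N (J+1)), ENNReal.ofReal (M n (fun i => b i.1))
          ≤ ∑' n, ENNReal.ofReal (M n (fun i => b i.1)) := ENNReal.sum_le_tsum _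
      have h2 : ENNReal.ofReal (∑ n ∈ Finset.Ico (N 1) (N (J+1)), M n (fun i => b i.1))
          = ∑ n ∈ Finset.Ico (N 1) (N (J+1)), ENNReal.ofReal (M n (fun i => b i.1)) :=
        ENNReal.ofReal_sum_of_nonneg (fun n _ => (hMpos n _ (fun i => hbpos _)).le)
      calc (J : ENNReal) = ENNReal.ofReal (J : ℝ) := by
            simp [ENNReal.ofReal_natCast]
        _ ≤ ENNReal.ofReal (∑ n ∈ Finset.Ico (N 1) (N (J+1)), M n (fun i => b i.1)) :=
            ENNReal.ofReal_le_ofReal (hMparts J)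
        _ = _ := h2
        _ ≤ _ := h1
    by_contra h
    obtain ⟨J, hJ⟩ := ENNReal.exists_nat_gt h
    exact absurd (hbound J) (not_le.2 hJ)
end

section
/- Let M be a homogeneous, monotone mean on positive reals such that the limit C := lim_{n→∞} n · M(1, 1/2, ..., 1/n) exists in [0, +∞]. If M is a weak-Hardy mean, then C is finite. -/
open scoped ENNReal
/-!
Put `u n = 1/(n+1)` and `A n = (n+1) M(u_0, …, u_n)`, and suppose `A n → ∞`. Cut `ℕ` into
consecutive blocks `[N k, N (k+1))` on which `A ≥ 2^k` and whose harmonic masses `h k ≥ 1` do not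
decrease, and weight `u` by `c = (2^k h k)⁻¹` on block `k`. Then `b = c u` has block sums `2^{-k}`,
so it is summable. Since `c` is nonincreasing, `b_i ≥ c_n u_i` for `i ≤ n`, so monotonicity and
homogeneity give `M(b_0, …, b_n) ≥ c_n M(u_0, …, u_n) = c_n A_n u_n`, whose block sums are at
least `1`: `M` is not weak-Hardy.
-/

open Filter Finset Topology

theorem Finset.sum_range_eq_sum_sum_Ico {G : Type*} [AddCommMonoid G] (f : ℕ → G) {N : ℕ → ℕ}
    (hN : Monotone N) (hN0 : N 0 = 0) (J : ℕ) :
    ∑ i ∈ range (N J), f i = ∑ k ∈ range J, ∑ i ∈ Ico (N k) (N (k + 1)), f i := by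
  induction J with
  | zero => simp [hN0]
  | succ J ih => rw [sum_range_succ, ← ih, sum_range_add_sum_Ico _ (hN J.le_succ)]

theorem Summable.tendsto_sum_Ico_atTop_zero {G : Type*} [AddCommGroup G] [TopologicalSpace G]
    [IsTopologicalAddGroup G] {f : ℕ → G} (hf : Summable f) {N : ℕ → ℕ} (hN : StrictMono N) :
    Tendsto (fun k => ∑ i ∈ Ico (N k) (N (k + 1)), f i) atTop (𝓝 0) := by
  have hlim := hf.hasSum.tendsto_sum_nat
  have := (hlim.comp (hN.tendsto_atTop.comp (tendsto_add_atTop_nat 1))).sub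
    (hlim.comp hN.tendsto_atTop)
  rw [sub_self] at this
  exact this.congr fun k => (sum_Ico_eq_sub _ (hN.monotone k.le_succ)).symm

theorem StrictMono.findGreatest_eq_of_le_of_lt {N : ℕ → ℕ} (hN : StrictMono N) {k n : ℕ}
    (hk : N k ≤ n) (hn : n < N (k + 1)) : Nat.findGreatest (fun j => N j ≤ n) n = k :=
  Nat.findGreatest_eq_iff.2 ⟨(hN.id_le k).trans hk, fun _ => hk,
    fun _ hkj _ hj => (hn.trans_le (hN.monotone hkj)).not_ge hj⟩

theorem exists_blocks_of_tendsto_atTop {w a : ℕ → ℝ} (hw : ∀ n, 0 ≤ w n)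
    (hS : Tendsto (fun n => ∑ i ∈ range n, w i) atTop atTop) (ha : Tendsto a atTop atTop) :
    ∃ N : ℕ → ℕ, N 0 = 0 ∧ StrictMono N ∧
      (∀ k, 1 ≤ ∑ i ∈ Ico (N k) (N (k + 1)), w i) ∧
      Monotone (fun k => ∑ i ∈ Ico (N k) (N (k + 1)), w i) ∧
      ∀ k n, N (k + 1) ≤ n → (2 : ℝ) ^ (k + 1) ≤ a n := by
  -- a block at least as heavy as everything before it is at least as heavy as its predecessor
  have hnext : ∀ k m : ℕ, ∃ m', m < m' ∧ 2 * ∑ i ∈ range m, w i + 1 ≤ ∑ i ∈ range m', w i ∧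
      ∀ n, m' ≤ n → (2 : ℝ) ^ (k + 1) ≤ a n := fun k m =>
    ((eventually_gt_atTop m).and ((hS.eventually_ge_atTop _).and
      (eventually_forall_ge_atTop.2 (ha.eventually_ge_atTop _)))).exists
  choose next hlt hmass hbig using hnext
  set N : ℕ → ℕ := fun k => Nat.rec 0 next k
  have hN : StrictMono N := strictMono_nat_of_lt_succ fun k => hlt k (N k)
  have hS0 : ∀ n, 0 ≤ ∑ i ∈ range n, w i := fun n => sum_nonneg fun i _ => hw i
  have hblock : ∀ k, ∑ i ∈ Ico (N k) (N (k + 1)), w i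
      = ∑ i ∈ range (N (k + 1)), w i - ∑ i ∈ range (N k), w i :=
    fun k => sum_Ico_eq_sub _ (hN.monotone k.le_succ)
  refine ⟨N, rfl, hN, fun k => ?_, monotone_nat_of_le_succ fun k => ?_, fun k => hbig k (N k)⟩
  · rw [hblock]
    linarith [hmass k (N k), hS0 (N k)]
  · rw [hblock k, hblock (k + 1)]
    linarith [hmass (k + 1) (N (k + 1)), hS0 (N k)]

theorem exists_antitone_summable_mul_not_summable {w a : ℕ → ℝ} (hw : ∀ n, 0 ≤ w n)
    (hS : Tendsto (fun n => ∑ i ∈ range n, w i) atTop atTop) (ha : Tendsto a atTop atTop) :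
    ∃ c : ℕ → ℝ, (∀ n, 0 < c n) ∧ Antitone c ∧ Summable (fun n => c n * w n) ∧
      ¬ Summable (fun n => c n * a n * w n) := by
  obtain ⟨N, hN0, hN, hmass_one, hmass_mono, hbig⟩ := exists_blocks_of_tendsto_atTop hw hS ha
  set h : ℕ → ℝ := fun k => ∑ i ∈ Ico (N k) (N (k + 1)), w i
  set e : ℕ → ℝ := fun k => (2 ^ k * h k)⁻¹
  have hh_pos : ∀ k, 0 < h k := fun k => one_pos.trans_le (hmass_one k)
  have he_pos : ∀ k, 0 < e k := fun k => inv_pos.2 (mul_pos (pow_pos two_pos k) (hh_pos k))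
  have he_anti : Antitone e := fun j k hjk => inv_anti₀ (mul_pos (pow_pos two_pos j) (hh_pos j))
    (mul_le_mul (pow_le_pow_right₀ one_le_two hjk) (hmass_mono hjk) (hh_pos j).le
      (pow_pos two_pos k).le)
  have he_mul : ∀ k, e k * h k = (1 / 2) ^ k := fun k => by
    simp only [e]
    field_simp [(hh_pos k).ne']
    rw [← mul_pow]
    norm_num
  set K : ℕ → ℕ := fun n => Nat.findGreatest (fun k => N k ≤ n) n
  have hK : ∀ k, ∀ n ∈ Ico (N k) (N (k + 1)), K n = k := fun k n hn =>
    hN.findGreatest_eq_of_le_of_lt (mem_Ico.1 hn).1 (mem_Ico.1 hn).2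
  have hK_mono : Monotone K := fun m n hmn => Nat.findGreatest_mono (fun _ hk => hk.trans hmn) hmn
  have hcw_block : ∀ k, ∑ n ∈ Ico (N k) (N (k + 1)), e (K n) * w n = (1 / 2) ^ k := by
    intro k
    rw [sum_congr rfl fun n hn => by rw [hK k n hn], ← mul_sum]
    exact he_mul k
  have hcaw_block : ∀ k, 1 ≤ ∑ n ∈ Ico (N (k + 1)) (N (k + 2)), e (K n) * a n * w n := by
    intro k
    calc (1 : ℝ) = ∑ n ∈ Ico (N (k + 1)) (N (k + 2)), e (k + 1) * 2 ^ (k + 1) * w n := by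
          rw [← mul_sum, mul_right_comm, he_mul, ← mul_pow]
          norm_num
      _ ≤ _ := sum_le_sum fun n hn => by
          rw [hK (k + 1) n hn]
          exact mul_le_mul_of_nonneg_right
            (mul_le_mul_of_nonneg_left (hbig k n (mem_Ico.1 hn).1) (he_pos _).le) (hw n)
  refine ⟨fun n => e (K n), fun n => he_pos _, he_anti.comp_monotone hK_mono, ?_, fun hsum => ?_⟩
  · refine summable_of_sum_range_le (c := 2) (fun n => mul_nonneg (he_pos _).le (hw n)) fun J => ?_
    calc ∑ n ∈ range J, e (K n) * w n ≤ ∑ n ∈ range (N J), e (K n) * w n :=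
          sum_le_sum_of_subset_of_nonneg (range_subset_range.2 (hN.id_le J))
            fun n _ _ => mul_nonneg (he_pos _).le (hw n)
      _ = ∑ k ∈ range J, (1 / 2 : ℝ) ^ k := by
          rw [sum_range_eq_sum_sum_Ico _ hN.monotone hN0]
          exact sum_congr rfl fun k _ => hcw_block k
      _ ≤ 2 := sum_geometric_two_le J
  · obtain ⟨k, hk⟩ := (((hsum.tendsto_sum_Ico_atTop_zero hN).comp
      (tendsto_add_atTop_nat 1)).eventually_lt_const one_pos).exists
    exact (hcaw_block k).not_gt hk

section Means

variable {M : ∀ n : ℕ, (Fin (n+1) → ℝ) → ℝ}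

theorem IsMean.pos (hM : IsMean M) {n : ℕ} {v : Fin (n+1) → ℝ} (hv : ∀ i, 0 < v i) :
    0 < M n v :=
  ((lt_inf'_iff _).2 fun i _ => hv i).trans_le (hM n v hv).1

theorem IsMonotoneMean.mul_le_of_antitone (hmono : IsMonotoneMean M) (hhom : IsHomogeneousMean M)
    {c v : ℕ → ℝ} (hc : ∀ n, 0 < c n) (hc_anti : Antitone c) (hv : ∀ n, 0 < v n) (n : ℕ) :
    c n * M n (fun i => v i) ≤ M n (fun i => c i * v i) := by
  rw [← hhom n _ _ (hc n) fun i => hv i]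
  exact hmono n _ _ (fun i => mul_pos (hc n) (hv i))
    fun i => mul_le_mul_of_nonneg_right (hc_anti (Nat.lt_succ_iff.1 i.2)) (hv i).le

end Means

/-- if `M` is a homogeneous monotone mean and the limit
`C = lim_n n · M(1, 1/2, …, 1/n)` exists in `[0,∞]`, and `M` is weak-Hardy,
then `C` is finite.  (`M n (fun i => 1/(i+1))` is `M(1, 1/2, …, 1/(n+1))`.) -/
theorem stmt6 (M : ∀ n : ℕ, (Fin (n+1) → ℝ) → ℝ) (hM : IsMean M)
    (hhom : IsHomogeneousMean M) (hmono : IsMonotoneMean M)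
    (C : ℝ≥0∞)
    (hlim : Filter.Tendsto
      (fun n : ℕ => ENNReal.ofReal ((n + 1 : ℝ) * M n (fun i => 1 / (i.1 + 1 : ℝ))))
      Filter.atTop (nhds C))
    (hWH : IsWeakHardyMean M) : C ≠ ⊤ := by
  rintro rfl
  set u : ℕ → ℝ := fun n => 1 / (n + 1 : ℝ)
  have hu : ∀ n, 0 < u n := fun n => by positivity
  obtain ⟨c, hc, hc_anti, hcu, hnot⟩ := exists_antitone_summable_mul_not_summable
    (fun n => (hu n).le) Real.tendsto_sum_range_one_div_nat_succ_atTop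
    (ENNReal.tendsto_ofReal_nhds_top.1 hlim)
  have hMcu : Summable fun n => M n (fun i => c i * u i) := by
    have hb := hWH (fun n => c n * u n) (fun n => mul_pos (hc n) (hu n)) hcu.tsum_ofReal_ne_top
    exact (ENNReal.summable_toReal hb).congr fun n =>
      ENNReal.toReal_ofReal (hM.pos fun i => mul_pos (hc i) (hu i)).le
  have hcancel : ∀ n, c n * M n (fun i => u i) = c n * ((n + 1 : ℝ) * M n (fun i => u i)) * u n :=
    fun n => by simp only [u]; field_simp
  refine hnot ((hMcu.of_nonneg_of_le (fun n => ?_) fun n => ?_).congr hcancel)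
  · exact mul_nonneg (hc n).le (hM.pos fun i => hu i).le
  · exact hmono.mul_le_of_antitone hhom hc hc_anti hu n
end

section
/- Let M be a homogeneous, monotone mean on positive reals whose Hardy constant equals lim_{n→∞} n · M(1, 1/2, ..., 1/n) (this limit existing in [0,+∞]). Then M is a Hardy mean if and only if M is a weak-Hardy mean. -/
open scoped ENNReal

/-- The set of (extended-real) Hardy constants of `M`: those `K` with
`∑ M(a_1,…,a_n) ≤ K ∑ a_n` for every positive summable `(a_n)`. -/
def HardyConstSet (M : ∀ n : ℕ, (Fin (n+1) → ℝ) → ℝ) : Set ℝ≥0∞ :=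
  {K | ∀ a : ℕ → ℝ, (∀ n, 0 < a n) → (∑' n, ENNReal.ofReal (a n)) ≠ ⊤ →
    (∑' n, ENNReal.ofReal (M n (fun i => a i.1))) ≤ K * ∑' n, ENNReal.ofReal (a n)}

/-- The Hardy constant `Hc(M)`: the smallest extended real `K` as above. -/
noncomputable def HardyConstant (M : ∀ n : ℕ, (Fin (n+1) → ℝ) → ℝ) : ℝ≥0∞ :=
  sInf (HardyConstSet M)

/-- `M` is a Hardy mean: some finite `K` works. -/
def IsHardyMean (M : ∀ n : ℕ, (Fin (n+1) → ℝ) → ℝ) : Prop :=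
  ∃ K : ℝ≥0∞, K ≠ ⊤ ∧ K ∈ HardyConstSet M

/-!
The infimum defining `HardyConstant M` is attained, so a weak-Hardy mean fails to be Hardy only
if `Hc(M) = ∞`, i.e. `(n+1) M(1, 1/2, …, 1/(n+1)) → ∞`. Then, writing `w n = 1/(n+1)`,
the sums `∑_{n<N} M(w_0, …, w_n)` eventually exceed `2^k ∑_{n<N} w n` (a Cesàro argument, since
`∑ w` diverges). Choosing such `N_k` and superposing the steps `τ_k 1_{[0,N_k)}`, normalized so
that each contributes `≤ 2^{-k}` to `∑ c w` and exactly `1` to `∑ c n M(w_0, …, w_n)`, gives a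
positive nonincreasing `c`. By monotonicity and homogeneity `M(c_0 w_0, …, c_n w_n) ≥
c_n M(w_0, …, w_n)`, so `a = c w` is summable while `∑ M(a_0, …, a_n) = ∞`.
-/

open Filter Finset Asymptotics

theorem hardyConstant_mem_hardyConstSet (M : ∀ n : ℕ, (Fin (n+1) → ℝ) → ℝ) :
    HardyConstant M ∈ HardyConstSet M := by
  intro a ha hfin
  set A := ∑' n, ENNReal.ofReal (a n)
  set S := ∑' n, ENNReal.ofReal (M n (fun i => a i.1))
  have hA : A ≠ 0 := fun h0 => (ENNReal.ofReal_pos.2 (ha 0)).ne' (ENNReal.tsum_eq_zero.1 h0 0)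
  have hratio : S / A ≤ HardyConstant M :=
    le_sInf fun K hK => (ENNReal.div_le_iff_le_mul (Or.inl hA) (Or.inl hfin)).2 (hK a ha hfin)
  calc S = S / A * A := (ENNReal.div_mul_cancel hA hfin).symm
    _ ≤ HardyConstant M * A := mul_le_mul_left hratio A

section Means

variable {M : ∀ n : ℕ, (Fin (n+1) → ℝ) → ℝ}

theorem IsHardyMean.isWeakHardyMean (hH : IsHardyMean M) : IsWeakHardyMean M := by
  obtain ⟨K, hK, hmem⟩ := hH
  exact fun b hb hfin =>
    ne_top_of_le_ne_top (ENNReal.mul_ne_top hK hfin) (hmem b hb hfin)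

theorem IsMean.le_mean (hM : IsMean M) {n : ℕ} {v : Fin (n+1) → ℝ} (hv : ∀ i, 0 < v i)
    {c : ℝ} (hc : ∀ i, c ≤ v i) : c ≤ M n v :=
  (Finset.le_inf' _ _ fun i _ => hc i).trans (hM n v hv).1

theorem mul_mean_le_mean_mul_of_antitone (hhom : IsHomogeneousMean M)
    (hmono : IsMonotoneMean M) {v c : ℕ → ℝ} (hv : ∀ n, 0 < v n) (hc : ∀ n, 0 < c n)
    (hanti : Antitone c) (n : ℕ) :
    c n * M n (fun i => v i) ≤ M n (fun i => c i * v i) := by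
  rw [← hhom n _ _ (hc n) fun i => hv i]
  exact hmono n _ _ (fun i => mul_pos (hc n) (hv i)) fun i =>
    mul_le_mul_of_nonneg_right (hanti (Nat.lt_succ_iff.1 i.isLt)) (hv i).le

end Means

noncomputable def sumSteps (τ : ℕ → ℝ) (N : ℕ → ℕ) (n : ℕ) : ℝ :=
  ∑' k, if n < N k then τ k else 0

section SumSteps

variable {τ : ℕ → ℝ} {N : ℕ → ℕ}

theorem summable_step (hτ : ∀ k, 0 ≤ τ k) (hτs : Summable τ) (n : ℕ) :
    Summable fun k => if n < N k then τ k else 0 :=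
  hτs.of_nonneg_of_le (fun k => by split_ifs <;> simp [hτ k])
    (fun k => by split_ifs <;> simp [hτ k])

theorem sumSteps_pos (hτ : ∀ k, 0 < τ k) (hτs : Summable τ) (hN : ∀ k, k < N k) (n : ℕ) :
    0 < sumSteps τ N n :=
  (summable_step (fun k => (hτ k).le) hτs n).tsum_pos
    (fun k => by split_ifs <;> simp [(hτ k).le]) n (by simp [hN n, hτ n])

theorem antitone_sumSteps (hτ : ∀ k, 0 ≤ τ k) (hτs : Summable τ) : Antitone (sumSteps τ N) :=
  fun m n hmn => Summable.tsum_le_tsum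
    (fun k => by split_ifs <;> first | omega | simp [hτ k])
    (summable_step hτ hτs n) (summable_step hτ hτs m)

theorem tsum_ofReal_sumSteps_mul (hτ : ∀ k, 0 ≤ τ k) (hτs : Summable τ) {f : ℕ → ℝ}
    (hf : ∀ n, 0 ≤ f n) :
    ∑' n, ENNReal.ofReal (sumSteps τ N n * f n)
      = ∑' k, ENNReal.ofReal (τ k * ∑ n ∈ range (N k), f n) := by
  have hterm : ∀ n k, 0 ≤ (if n < N k then τ k else 0) * f n := fun n k =>
    mul_nonneg (by split_ifs <;> simp [hτ k]) (hf n)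
  calc ∑' n, ENNReal.ofReal (sumSteps τ N n * f n)
      = ∑' n, ∑' k, ENNReal.ofReal ((if n < N k then τ k else 0) * f n) := by
        congr 1; ext n
        rw [sumSteps, ← tsum_mul_right,
          ENNReal.ofReal_tsum_of_nonneg (hterm n) ((summable_step hτ hτs n).mul_right _)]
    _ = ∑' k, ∑' n, ENNReal.ofReal ((if n < N k then τ k else 0) * f n) := ENNReal.tsum_comm
    _ = ∑' k, ENNReal.ofReal (τ k * ∑ n ∈ range (N k), f n) := by
        congr 1; ext k
        rw [tsum_eq_sum (s := range (N k)) fun n hn => by simp [not_lt.2 (by simpa using hn)], mul_sum,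
          ENNReal.ofReal_sum_of_nonneg fun n _ => mul_nonneg (hτ k) (hf n)]
        exact sum_congr rfl fun n hn => by simp [mem_range.1 hn]

end SumSteps

theorem exists_antitone_tsum_mul_ne_top_eq_top {w f : ℕ → ℝ} (hw : ∀ n, 0 < w n)
    (hwf : ∀ n, w n ≤ f n)
    (hblock : ∀ k, ∃ N, k < N ∧ ∑ n ∈ range N, w n ≤ (1 / 2) ^ k * ∑ n ∈ range N, f n) :
    ∃ c : ℕ → ℝ, (∀ n, 0 < c n) ∧ Antitone c ∧
      ∑' n, ENNReal.ofReal (c n * w n) ≠ ⊤ ∧ ∑' n, ENNReal.ofReal (c n * f n) = ⊤ := by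
  choose N hkN hN using hblock
  have hf : ∀ n, 0 ≤ f n := fun n => (hw n).le.trans (hwf n)
  have hw0 : ∀ k, w 0 ≤ ∑ n ∈ range (N k), w n := fun k =>
    single_le_sum (fun n _ => (hw n).le) (mem_range.2 (pos_of_gt (hkN k)))
  have hG : ∀ k, 0 < ∑ n ∈ range (N k), f n := fun k =>
    (hw 0).trans_le ((hw0 k).trans (sum_le_sum fun n _ => hwf n))
  -- `τ k` is chosen so that the `k`-th step contributes exactly `1` to `∑ c f`
  set τ : ℕ → ℝ := fun k => (∑ n ∈ range (N k), f n)⁻¹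
  have hτ : ∀ k, 0 < τ k := fun k => inv_pos.2 (hG k)
  have hτw : ∀ k, τ k * ∑ n ∈ range (N k), w n ≤ (1 / 2) ^ k := fun k => by
    rw [inv_mul_le_iff₀ (hG k), mul_comm]; exact hN k
  have hτs : Summable τ := (summable_geometric_two.div_const (w 0)).of_nonneg_of_le
    (fun k => (hτ k).le) fun k => (le_div_iff₀ (hw 0)).2
      ((mul_le_mul_of_nonneg_left (hw0 k) (hτ k).le).trans (hτw k))
  refine ⟨sumSteps τ N, sumSteps_pos hτ hτs hkN, antitone_sumSteps (fun k => (hτ k).le) hτs,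
    ?_, ?_⟩
  · rw [tsum_ofReal_sumSteps_mul (fun k => (hτ k).le) hτs fun n => (hw n).le]
    refine ne_top_of_le_ne_top (b := ∑' k, ENNReal.ofReal ((1 / 2) ^ k)) ?_
      (ENNReal.tsum_le_tsum fun k => ENNReal.ofReal_le_ofReal (hτw k))
    rw [← ENNReal.ofReal_tsum_of_nonneg (fun k => by positivity) summable_geometric_two]
    exact ENNReal.ofReal_ne_top
  · rw [tsum_ofReal_sumSteps_mul (fun k => (hτ k).le) hτs hf]
    simp only [τ, inv_mul_cancel₀ (hG _).ne', ENNReal.ofReal_one]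
    exact ENNReal.tsum_const_eq_top_of_ne_zero one_ne_zero

theorem IsWeakHardyMean.not_tendsto_atTop {M : ∀ n : ℕ, (Fin (n+1) → ℝ) → ℝ}
    (hweak : IsWeakHardyMean M) (hM : IsMean M) (hhom : IsHomogeneousMean M)
    (hmono : IsMonotoneMean M) :
    ¬ Tendsto (fun n : ℕ => (n + 1 : ℝ) * M n (fun i => 1 / (i.1 + 1 : ℝ))) atTop atTop := by
  intro htop
  set w : ℕ → ℝ := fun n => 1 / (n + 1)
  set f : ℕ → ℝ := fun n => M n (fun i => w i)
  have hw : ∀ n, 0 < w n := fun n => by positivity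
  have hwf : ∀ n, w n ≤ f n := fun n => hM.le_mean (fun i => hw i) fun i =>
    one_div_le_one_div_of_le (by positivity) (by exact_mod_cast i.isLt)
  have hwo : w =o[atTop] f := by
    refine isLittleO_of_tendsto (fun n h0 => absurd h0 ((hw n).trans_le (hwf n)).ne') ?_
    refine htop.inv_tendsto_atTop.congr fun n => ?_
    simp only [w, f, Pi.inv_apply]
    rw [div_div, mul_comm, one_div]
  have hsums := hwo.sum_range (fun n => (hw n).le.trans (hwf n)) <|
    tendsto_atTop_mono (fun N => sum_le_sum fun n _ => hwf n)
      Real.tendsto_sum_range_one_div_nat_succ_atTop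
  have hblock : ∀ k, ∃ N, k < N ∧ ∑ n ∈ range N, w n ≤ (1 / 2) ^ k * ∑ n ∈ range N, f n := by
    intro k
    obtain ⟨N, hN, hkN⟩ := ((isLittleO_iff.1 hsums (by positivity : (0 : ℝ) < (1 / 2) ^ k)).and
      (eventually_gt_atTop k)).exists
    refine ⟨N, hkN, ?_⟩
    rwa [Real.norm_of_nonneg (sum_nonneg fun n _ => (hw n).le),
      Real.norm_of_nonneg (sum_nonneg fun n _ => (hw n).le.trans (hwf n))] at hN
  obtain ⟨c, hc, hanti, hfin, hinf⟩ := exists_antitone_tsum_mul_ne_top_eq_top hw hwf hblock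
  refine hweak (fun n => c n * w n) (fun n => mul_pos (hc n) (hw n)) hfin (top_unique ?_)
  exact hinf ▸ ENNReal.tsum_le_tsum fun n =>
    ENNReal.ofReal_le_ofReal (mul_mean_le_mean_mul_of_antitone hhom hmono hw hc hanti n)

/-- a homogeneous monotone mean whose Hardy constant equals
`lim_n n · M(1, 1/2, …, 1/n)` (the limit existing in `[0,∞]`) is a Hardy mean iff
it is a weak-Hardy mean. -/
theorem stmt7 (M : ∀ n : ℕ, (Fin (n+1) → ℝ) → ℝ) (hM : IsMean M)
    (hhom : IsHomogeneousMean M) (hmono : IsMonotoneMean M)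
    (hlim : Filter.Tendsto
      (fun n : ℕ => ENNReal.ofReal ((n + 1 : ℝ) * M n (fun i => 1 / (i.1 + 1 : ℝ))))
      Filter.atTop (nhds (HardyConstant M))) :
    IsHardyMean M ↔ IsWeakHardyMean M := by
  refine ⟨IsHardyMean.isWeakHardyMean, fun hweak =>
    ⟨HardyConstant M, fun htop => ?_, hardyConstant_mem_hardyConstSet M⟩⟩
  rw [htop] at hlim
  exact hweak.not_tendsto_atTop hM hhom hmono (ENNReal.tendsto_ofReal_nhds_top.1 hlim)
end
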